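/- There exists a constant C > 0 such that for all real x, y and all s > 0, |∂/∂s W_s(x,y)| ≤ C e^{-((x - e^{-s}y)^2 + (y - e^{-s}x)^2)/(8(1 - e^{-2s}))} · e^{-s/2} (1 - e^{-2s})^{-3/2}, where W_s(x,y) = π^{-1/2} (e^{-s}/(1 - e^{-2s}))^{1/2} exp(-((x - e^{-s}y)^2 + (y - e^{-s}x)^2)/(2(1 - e^{-2s}))) is the Hermite heat kernel. -/

import Mathlib

/-!
Put `p = e^{-s}`, `t = 1 - p²` and `Q = (x - p y)² + (y - p x)²`. For `s > 0` the kernel is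
`π^{-1/2} e^{-s/2} t^{-1/2} e^{-Q/(2t)}`, and differentiating gives
`∂ₛW = -π^{-1/2} e^{-s/2} t^{-3/2} e^{-Q/(2t)} F` with
`F = (1 + p²)/2 + p((x - p y) y + (y - p x) x) - p² Q/t`.
With `a = x - p y`, `b = y - p x` one has `t x = a + p b` and `t y = b + p a`, so the cross term
is `p(2ab + pQ)/t` and `|F| ≤ 1 + 3Q/t`. The polynomial factor in `q = Q/t` is then absorbed by
giving up part of the Gaussian: `e^{-q/2}(1 + 3q) ≤ 9 e^{-q/8}`.
-/

open MeasureTheory Real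

/-- The Hermite (Mehler) heat kernel `W_s(x,y)`. -/
noncomputable def hermiteHeatKernel (s x y : ℝ) : ℝ :=
  Real.pi ^ (-(1 : ℝ) / 2) * (Real.exp (-s) / (1 - Real.exp (-2 * s))) ^ ((1 : ℝ) / 2) *
    Real.exp (-((x - Real.exp (-s) * y) ^ 2 + (y - Real.exp (-s) * x) ^ 2) /
      (2 * (1 - Real.exp (-2 * s))))

def mehlerQuadratic (p x y : ℝ) : ℝ := (x - p * y) ^ 2 + (y - p * x) ^ 2

noncomputable def hermiteDerivFactor (p x y : ℝ) : ℝ :=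
  (1 + p ^ 2) / 2 + p * ((x - p * y) * y + (y - p * x) * x) -
    p ^ 2 * mehlerQuadratic p x y / (1 - p ^ 2)

lemma mehlerQuadratic_nonneg (p x y : ℝ) : 0 ≤ mehlerQuadratic p x y := by
  unfold mehlerQuadratic; positivity

lemma abs_one_sub_sq_mul_cross_le {p : ℝ} (hp : |p| ≤ 1) (x y : ℝ) :
    |(1 - p ^ 2) * ((x - p * y) * y + (y - p * x) * x)| ≤ 2 * mehlerQuadratic p x y := by
  have hid : (1 - p ^ 2) * ((x - p * y) * y + (y - p * x) * x) =
      2 * (x - p * y) * (y - p * x) + p * mehlerQuadratic p x y := by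
    unfold mehlerQuadratic; ring
  rw [hid, mehlerQuadratic]
  generalize x - p * y = a, y - p * x = b
  have hab : |2 * a * b| ≤ a ^ 2 + b ^ 2 :=
    abs_le.mpr ⟨by nlinarith [sq_nonneg (a + b)], by nlinarith [sq_nonneg (a - b)]⟩
  have hpQ : |p * (a ^ 2 + b ^ 2)| ≤ a ^ 2 + b ^ 2 := by
    rw [abs_mul, abs_of_nonneg (by positivity : 0 ≤ a ^ 2 + b ^ 2)]
    exact mul_le_of_le_one_left (by positivity) hp
  exact (abs_add_le _ _).trans (by linarith)

lemma abs_hermiteDerivFactor_le {p : ℝ} (hp₀ : 0 ≤ p) (hp₁ : p < 1) (x y : ℝ) :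
    |hermiteDerivFactor p x y| ≤ 1 + 3 * (mehlerQuadratic p x y / (1 - p ^ 2)) := by
  have hp : |p| ≤ 1 := abs_le.mpr ⟨by linarith, hp₁.le⟩
  have ht : 0 < 1 - p ^ 2 := by nlinarith
  have hq : 0 ≤ mehlerQuadratic p x y / (1 - p ^ 2) :=
    div_nonneg (mehlerQuadratic_nonneg p x y) ht.le
  have hfirst : |(1 + p ^ 2) / 2| ≤ 1 := by
    rw [abs_of_nonneg (by positivity)]; nlinarith
  have hcross : |p * ((x - p * y) * y + (y - p * x) * x)| ≤
      2 * (mehlerQuadratic p x y / (1 - p ^ 2)) := by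
    have hc : |(x - p * y) * y + (y - p * x) * x| ≤ 2 * (mehlerQuadratic p x y / (1 - p ^ 2)) := by
      rw [mul_div_assoc', le_div_iff₀ ht, mul_comm, ← abs_of_pos ht, ← abs_mul]
      exact abs_one_sub_sq_mul_cross_le hp x y
    rw [abs_mul]
    exact (mul_le_of_le_one_left (abs_nonneg _) hp).trans hc
  have hlast : |p ^ 2 * mehlerQuadratic p x y / (1 - p ^ 2)| ≤
      mehlerQuadratic p x y / (1 - p ^ 2) := by
    rw [mul_div_assoc, abs_mul, abs_of_nonneg hq, abs_of_nonneg (sq_nonneg p)]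
    exact mul_le_of_le_one_left hq (by nlinarith)
  calc |hermiteDerivFactor p x y|
      ≤ |(1 + p ^ 2) / 2| + |p * ((x - p * y) * y + (y - p * x) * x)| +
          |p ^ 2 * mehlerQuadratic p x y / (1 - p ^ 2)| :=
        (abs_sub _ _).trans (add_le_add_left (abs_add_le _ _) _)
    _ ≤ 1 + 3 * (mehlerQuadratic p x y / (1 - p ^ 2)) := by linarith

lemma one_add_eight_mul_mul_exp_neg_le {w : ℝ} (hw : 0 ≤ w) : (1 + 8 * w) * exp (-w) ≤ 9 := by
  have h₁ : exp (-w) ≤ 1 := exp_le_one_iff.mpr (neg_nonpos.mpr hw)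
  have h₂ : w * exp (-w) ≤ 1 :=
    (mul_exp_neg_le_exp_neg_one w).trans (exp_le_one_iff.mpr (by norm_num))
  linarith

lemma exp_neg_half_mul_one_add_three_mul_le {q : ℝ} (hq : 0 ≤ q) :
    exp (-q / 2) * (1 + 3 * q) ≤ 9 * exp (-q / 8) := by
  have hsplit : exp (-q / 2) = exp (-q / 8) * exp (-(3 * q / 8)) := by
    rw [← exp_add]; ring_nf
  calc exp (-q / 2) * (1 + 3 * q)
      = exp (-q / 8) * ((1 + 8 * (3 * q / 8)) * exp (-(3 * q / 8))) := by rw [hsplit]; ring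
    _ ≤ exp (-q / 8) * 9 := by gcongr; exact one_add_eight_mul_mul_exp_neg_le (by positivity)
    _ = 9 * exp (-q / 8) := mul_comm _ _

lemma exp_neg_two_mul_eq_sq (s : ℝ) : exp (-2 * s) = exp (-s) ^ 2 := by
  rw [← exp_nat_mul]; ring_nf

lemma hasDerivAt_exp_neg (s : ℝ) : HasDerivAt (fun s => exp (-s)) (-exp (-s)) s := by
  simpa using (hasDerivAt_neg s).exp

lemma hasDerivAt_mehlerQuadratic_exp_neg (x y s : ℝ) :
    HasDerivAt (fun s => mehlerQuadratic (exp (-s)) x y)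
      (2 * exp (-s) * ((x - exp (-s) * y) * y + (y - exp (-s) * x) * x)) s := by
  refine ((((hasDerivAt_const s x).fun_sub ((hasDerivAt_exp_neg s).mul_const y)).pow 2).fun_add
    (((hasDerivAt_const s y).fun_sub ((hasDerivAt_exp_neg s).mul_const x)).pow 2)).congr_deriv ?_
  ring

lemma hermiteHeatKernel_eq_of_pos {s : ℝ} (hs : 0 < s) (x y : ℝ) :
    hermiteHeatKernel s x y = π ^ (-(1 : ℝ) / 2) * exp (-s / 2) *
      (1 - exp (-s) ^ 2) ^ (-(1 : ℝ) / 2) *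
        exp (-mehlerQuadratic (exp (-s)) x y / (2 * (1 - exp (-s) ^ 2))) := by
  have ht : 0 < 1 - exp (-s) ^ 2 := by
    nlinarith [exp_pos (-s), exp_lt_one_iff.mpr (neg_neg_of_pos hs)]
  rw [hermiteHeatKernel, mehlerQuadratic, exp_neg_two_mul_eq_sq, div_rpow (exp_pos _).le ht.le,
    ← exp_mul, neg_div, rpow_neg ht.le, div_eq_mul_inv]
  ring_nf

lemma hasDerivAt_hermiteHeatKernel {s : ℝ} (hs : 0 < s) (x y : ℝ) :
    HasDerivAt (fun s => hermiteHeatKernel s x y)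
      (-(π ^ (-(1 : ℝ) / 2) * exp (-s / 2) * (1 - exp (-s) ^ 2) ^ (-(3 : ℝ) / 2) *
          exp (-mehlerQuadratic (exp (-s)) x y / (2 * (1 - exp (-s) ^ 2)))) *
        hermiteDerivFactor (exp (-s)) x y) s := by
  have ht₀ : 0 < 1 - exp (-s) ^ 2 := by
    nlinarith [exp_pos (-s), exp_lt_one_iff.mpr (neg_neg_of_pos hs)]
  have ht : HasDerivAt (fun s => 1 - exp (-s) ^ 2) (2 * exp (-s) ^ 2) s :=
    ((hasDerivAt_const s 1).fun_sub ((hasDerivAt_exp_neg s).pow 2)).congr_deriv (by ring)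
  have hhalf : HasDerivAt (fun s => exp (-s / 2)) (-(1 / 2) * exp (-s / 2)) s :=
    ((hasDerivAt_neg s).div_const 2).exp.congr_deriv (by ring)
  have hrpow := ht.rpow_const (p := -(1 : ℝ) / 2) (Or.inl ht₀.ne')
  have hgauss := ((hasDerivAt_mehlerQuadratic_exp_neg x y s).fun_neg.fun_div (ht.const_mul 2)
    (by positivity)).exp
  have hW := (((hasDerivAt_const s (π ^ (-(1 : ℝ) / 2))).fun_mul hhalf).fun_mul hrpow).fun_mul hgauss
  have hevent : (fun s => hermiteHeatKernel s x y) =ᶠ[nhds s] _ :=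
    (eventually_gt_nhds hs).mono fun s' hs' => hermiteHeatKernel_eq_of_pos hs' x y
  refine (hW.congr_of_eventuallyEq hevent).congr_deriv ?_
  have hr₁ : (1 - exp (-s) ^ 2) ^ (-(1 : ℝ) / 2 - 1) = (1 - exp (-s) ^ 2) ^ (-(3 : ℝ) / 2) := by
    norm_num
  have hr₂ : (1 - exp (-s) ^ 2) ^ (-(1 : ℝ) / 2) =
      (1 - exp (-s) ^ 2) * (1 - exp (-s) ^ 2) ^ (-(3 : ℝ) / 2) := by
    conv_lhs => rw [show -(1 : ℝ) / 2 = 1 + -(3 : ℝ) / 2 by norm_num, rpow_add ht₀, rpow_one]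
  rw [hr₁, hr₂, hermiteDerivFactor]
  field_simp
  ring

theorem stmt6 :
    ∃ C > 0, ∀ (x y s : ℝ), 0 < s →
      |deriv (fun s => hermiteHeatKernel s x y) s| ≤
        C * Real.exp (-((x - Real.exp (-s) * y) ^ 2 + (y - Real.exp (-s) * x) ^ 2) /
            (8 * (1 - Real.exp (-2 * s)))) *
          Real.exp (-s / 2) * (1 - Real.exp (-2 * s)) ^ (-(3 : ℝ) / 2) := by
  refine ⟨9, by norm_num, fun x y s hs => ?_⟩
  change _ ≤ 9 * exp (-mehlerQuadratic (exp (-s)) x y / (8 * (1 - exp (-2 * s)))) * _ * _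
  have hp₁ : exp (-s) < 1 := exp_lt_one_iff.mpr (neg_neg_of_pos hs)
  have ht : 0 < 1 - exp (-s) ^ 2 := by nlinarith [exp_pos (-s)]
  have hπ : π ^ (-(1 : ℝ) / 2) ≤ 1 :=
    rpow_le_one_of_one_le_of_nonpos (by linarith [pi_gt_three]) (by norm_num)
  have hF := abs_hermiteDerivFactor_le (exp_pos (-s)).le hp₁ x y
  have hQ := mehlerQuadratic_nonneg (exp (-s)) x y
  rw [(hasDerivAt_hermiteHeatKernel hs x y).deriv, abs_mul, abs_neg, abs_of_pos (by positivity),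
    exp_neg_two_mul_eq_sq]
  generalize hermiteDerivFactor (exp (-s)) x y = F at hF ⊢
  generalize 1 - exp (-s) ^ 2 = t at ht hF ⊢
  generalize mehlerQuadratic (exp (-s)) x y = Q at hQ hF ⊢
  calc _ ≤ 1 * exp (-s / 2) * t ^ (-(3 : ℝ) / 2) * (exp (-(Q / t) / 2) * (1 + 3 * (Q / t))) := by
        rw [show -Q / (2 * t) = -(Q / t) / 2 by ring, ← mul_assoc]
        gcongr
    _ ≤ 1 * exp (-s / 2) * t ^ (-(3 : ℝ) / 2) * (9 * exp (-(Q / t) / 8)) := by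
        gcongr ?_ * ?_
        exact exp_neg_half_mul_one_add_three_mul_le (div_nonneg hQ ht.le)
    _ = 9 * exp (-Q / (8 * t)) * exp (-s / 2) * t ^ (-(3 : ℝ) / 2) := by
        rw [show -Q / (8 * t) = -(Q / t) / 8 by ring]; ring
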